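/- Every Hom-alternative algebra is Hom-Maltsev-admissible: if (A,μ,α) is Hom-alternative, then its commutator Hom-algebra A⁻ = (A,[x,y] = xy − yx, α) is a Hom-Maltsev algebra, i.e., J_{A⁻}(α(x),α(y),[x,z]) = [J_{A⁻}(x,y,z),α²(x)] for all x,y,z. -/
import Mathlib


variable {K A : Type*} [Field K] [CharZero K] [AddCommGroup A] [Module K A]

/-- Hom-associator of a multiplication μ with twisting map α. -/
def homAs (μ : A →ₗ[K] A →ₗ[K] A) (α : A →ₗ[K] A) (x y z : A) : A :=
  μ (μ x y) (α z) - μ (α x) (μ y z)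

/-- Commutator bracket of μ. -/
def commBr (μ : A →ₗ[K] A →ₗ[K] A) (x y : A) : A := μ x y - μ y x

/-- Hom-Jacobian of the commutator bracket. -/
def commJac (μ : A →ₗ[K] A →ₗ[K] A) (α : A →ₗ[K] A) (x y z : A) : A :=
  commBr μ (commBr μ x y) (α z) + commBr μ (commBr μ z x) (α y) + commBr μ (commBr μ y z) (α x)

set_option maxHeartbeats 4000000 in
theorem stmt13 (μ : A →ₗ[K] A →ₗ[K] A) (α : A →ₗ[K] A)
    (hmult : ∀ x y : A, α (μ x y) = μ (α x) (α y))
    (h1 : ∀ x y : A, homAs μ α x x y = 0)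
    (h2 : ∀ x y : A, homAs μ α x y y = 0)
    (h3 : ∀ x y : A, homAs μ α x y x = 0) :
    ∀ x y z : A,
      commJac μ α (α x) (α y) (commBr μ x z)
        = commBr μ (commJac μ α x y z) (α (α x)) := by
  have z12 : ∀ a b c : A, homAs μ α a b c + homAs μ α b a c = 0 := by
    intro a b c
    have e : homAs μ α (a + b) (a + b) c =
        homAs μ α a a c + homAs μ α a b c + homAs μ α b a c + homAs μ α b b c := by
      simp only [homAs, map_add, LinearMap.add_apply]; module
    have t := h1 (a + b) c
    rw [e, h1 a c, h1 b c] at t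
    simpa using t
  have z23 : ∀ a b c : A, homAs μ α a b c + homAs μ α a c b = 0 := by
    intro a b c
    have e : homAs μ α a (b + c) (b + c) =
        homAs μ α a b b + homAs μ α a b c + homAs μ α a c b + homAs μ α a c c := by
      simp only [homAs, map_add, LinearMap.add_apply]; module
    have t := h2 a (b + c)
    rw [e, h2 a b, h2 a c] at t
    simpa using t
  have z13 : ∀ a b c : A, homAs μ α a b c + homAs μ α c b a = 0 := by
    intro a b c
    have e : homAs μ α (a + c) b (a + c) =
        homAs μ α a b a + homAs μ α a b c + homAs μ α c b a + homAs μ α c b c := by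
      simp only [homAs, map_add, LinearMap.add_apply]; module
    have t := h3 (a + c) b
    rw [e, h3 a b, h3 c b] at t
    simpa using t
  have lmul : ∀ (w : A) {u : A}, u = 0 → μ w u = 0 := by
    intro w u h; rw [h]; exact map_zero _
  have rmul : ∀ (w : A) {u : A}, u = 0 → μ u w = 0 := by
    intro w u h; rw [h]; simp
  intro x y z
  have key : commJac μ α (α x) (α y) (commBr μ x z)
      - commBr μ (commJac μ α x y z) (α (α x)) =
        ((3 : K)) • ((homAs μ α (μ (x) (z)) (α x) (α y) + homAs μ α (α x) (μ (x) (z)) (α y)))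
          + ((-3 : K)) • ((homAs μ α (μ (z) (x)) (α x) (α y) + homAs μ α (α x) (μ (z) (x)) (α y)))
          + ((6 : K)) • ((homAs μ α (μ (z) (y)) (α x) (α x)))
          + ((-1 : K)) • ((homAs μ α (μ (x) (z)) (α x) (α y) + homAs μ α (α y) (α x) (μ (x) (z))))
          + ((1 : K)) • ((homAs μ α (α x) (μ (x) (z)) (α y) + homAs μ α (α x) (α y) (μ (x) (z))))
          + ((1 : K)) • (μ (homAs μ α (x) (y) (z) + homAs μ α (y) (x) (z)) (α (α x)))
          + ((1 : K)) • ((homAs μ α (α x) (μ (x) (z)) (α y) + homAs μ α (α y) (μ (x) (z)) (α x)))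
          + ((1 : K)) • (μ (homAs μ α (x) (y) (z) + homAs μ α (z) (y) (x)) (α (α x)))
          + ((1 : K)) • ((homAs μ α (μ (z) (x)) (α x) (α y) + homAs μ α (α y) (α x) (μ (z) (x))))
          + ((-6 : K)) • ((homAs μ α (α y) (μ (x) (x)) (α z) + homAs μ α (α y) (α z) (μ (x) (x))))
          + ((6 : K)) • ((homAs μ α (μ (x) (x)) (α y) (α z) + homAs μ α (α y) (μ (x) (x)) (α z)))
          + ((-3 : K)) • (μ (homAs μ α (x) (y) (z) + homAs μ α (x) (z) (y)) (α (α x)))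
          + ((-1 : K)) • ((homAs μ α (μ (x) (z)) (α x) (α y) + homAs μ α (μ (x) (z)) (α y) (α x)))
          + ((-1 : K)) • (μ (homAs μ α (x) (z) (y) + homAs μ α (z) (x) (y)) (α (α x)))
          + ((1 : K)) • ((homAs μ α (μ (z) (x)) (α x) (α y) + homAs μ α (μ (z) (x)) (α y) (α x)))
          + ((-6 : K)) • ((homAs μ α (μ (y) (z)) (α x) (α x)))
          + ((-1 : K)) • ((homAs μ α (α x) (μ (z) (x)) (α y) + homAs μ α (α x) (α y) (μ (z) (x))))
          + ((-1 : K)) • (μ (α (α x)) (homAs μ α (x) (y) (z) + homAs μ α (y) (x) (z)))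
          + ((3 : K)) • (μ (α (α x)) (homAs μ α (x) (y) (z) + homAs μ α (x) (z) (y)))
          + ((-1 : K)) • (μ (α (α x)) (homAs μ α (x) (y) (z) + homAs μ α (z) (y) (x)))
          + ((1 : K)) • (μ (α (α x)) (homAs μ α (x) (z) (y) + homAs μ α (y) (z) (x)))
          + ((1 : K)) • (μ (α (α x)) (homAs μ α (x) (z) (y) + homAs μ α (z) (x) (y)))
          + ((5 : K)) • (μ (homAs μ α (x) (z) (y) + homAs μ α (y) (z) (x)) (α (α x)))
          + ((5 : K)) • ((homAs μ α (α x) (μ (z) (x)) (α y) + homAs μ α (α y) (μ (z) (x)) (α x)))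
          + ((6 : K)) • (μ (α (α y)) (homAs μ α (x) (x) (z) + homAs μ α (z) (x) (x)))
          + ((-6 : K)) • (μ (α (α y)) (homAs μ α (x) (x) (z)))
          + ((6 : K)) • (μ (homAs μ α (x) (x) (z)) (α (α y)))
          + ((-6 : K)) • ((homAs μ α (μ (x) (x)) (α y) (α z) + homAs μ α (μ (x) (x)) (α z) (α y)))
          + ((-6 : K)) • ((homAs μ α (μ (z) (y)) (α x) (α x) + homAs μ α (α x) (α x) (μ (z) (y)))) := by
    simp only [commJac, commBr, homAs, hmult, map_add, map_sub, LinearMap.add_apply,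
      LinearMap.sub_apply]
    module
  rw [(z12 (μ (x) (z)) (α x) (α y)), (z12 (μ (z) (x)) (α x) (α y)), (h2 (μ (z) (y)) (α x)), (z13 (μ (x) (z)) (α x) (α y)), (z23 (α x) (μ (x) (z)) (α y)), (rmul (α (α x)) (z12 (x) (y) (z))), (z13 (α x) (μ (x) (z)) (α y)), (rmul (α (α x)) (z13 (x) (y) (z))), (z13 (μ (z) (x)) (α x) (α y)), (z23 (α y) (μ (x) (x)) (α z)), (z12 (μ (x) (x)) (α y) (α z)), (rmul (α (α x)) (z23 (x) (y) (z))), (z23 (μ (x) (z)) (α x) (α y)), (rmul (α (α x)) (z12 (x) (z) (y))), (z23 (μ (z) (x)) (α x) (α y)), (h2 (μ (y) (z)) (α x)), (z23 (α x) (μ (z) (x)) (α y)), (lmul (α (α x)) (z12 (x) (y) (z))), (lmul (α (α x)) (z23 (x) (y) (z))), (lmul (α (α x)) (z13 (x) (y) (z))), (lmul (α (α x)) (z13 (x) (z) (y))), (lmul (α (α x)) (z12 (x) (z) (y))), (rmul (α (α x)) (z13 (x) (z) (y))), (z13 (α x) (μ (z) (x)) (α y)), (lmul (α (α y)) (z13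 (x) (x) (z))), (lmul (α (α y)) (h1 (x) (z))), (rmul (α (α y)) (h1 (x) (z))), (z23 (μ (x) (x)) (α y) (α z)), (h1 (α x) (μ (z) (y)))] at key
  simp only [smul_zero, zero_add, add_zero, smul_add] at key
  exact sub_eq_zero.mp key
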